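/- For a set of N equally likely mutually orthogonal pure states in ℂ^{d₁} ⊗ ℂ^{d₂}, the separable fidelity satisfies F_S ≤ λ_max · d₁ · d₂ / N, where λ_max is the maximum over the ensemble of the squared largest Schmidt coefficient. -/

import Mathlib

/-!
Write each POVM element as `mₐ |χₐ⟩⟨χₐ|` with `χₐ = χ₁ₐ ⊗ χ₂ₐ`. By homogeneity, the bound
`|⟨ψᵢ|a ⊗ b⟩|² ≤ λᵢ ≤ λ_max` for unit `a, b` gives `|⟨ψᵢ|χₐ⟩|² ≤ λ_max ‖χₐ‖²`, and Bessel's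
inequality for the orthonormal `ψᵢ` gives `∑ᵢ |⟨ψᵢ|φₐ⟩|² ≤ 1`. Hence the fidelity is at most
`λ_max / N · ∑ₐ mₐ ‖χₐ‖²`, and the trace of the completeness relation `∑ₐ mₐ |χₐ⟩⟨χₐ| = 1`
says `∑ₐ mₐ ‖χₐ‖² = d₁ d₂`.
-/

open Matrix
open scoped BigOperators ComplexOrder

noncomputable section

/-- Product vector `|a⟩⊗|b⟩` in `ℂ^{d₁} ⊗ ℂ^{d₂}`. -/
def prodv {d₁ d₂ : ℕ} (a : Fin d₁ → ℂ) (b : Fin d₂ → ℂ) : Fin d₁ × Fin d₂ → ℂ :=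
  fun y => a y.1 * b y.2

/-- The set of average fidelities achievable by (rank-one) separable measurements
together with guessing strategies; its supremum is the separable fidelity `F_S`. -/
def sepFidSet {d₁ d₂ : ℕ} (N : ℕ) (p : Fin N → ℝ)
    (ψ : Fin N → (Fin d₁ × Fin d₂ → ℂ)) : Set ℝ :=
  {x : ℝ | ∃ (A : ℕ) (m : Fin A → ℝ) (χ₁ : Fin A → Fin d₁ → ℂ)
      (χ₂ : Fin A → Fin d₂ → ℂ) (φ : Fin A → (Fin d₁ × Fin d₂ → ℂ)),
    (∀ a, 0 < m a) ∧ (∀ a, star (φ a) ⬝ᵥ φ a = 1) ∧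
    (∑ a, (m a : ℂ) • Matrix.vecMulVec (prodv (χ₁ a) (χ₂ a))
        (star (prodv (χ₁ a) (χ₂ a))) = 1) ∧
    x = ∑ a, ∑ i, p i * m a *
          (‖star (ψ i) ⬝ᵥ prodv (χ₁ a) (χ₂ a)‖)^2 *
          (‖star (ψ i) ⬝ᵥ φ a‖)^2}

lemma star_dotProduct_self_eq_sum_norm_sq {ι : Type*} [Fintype ι] (c : ι → ℂ) :
    star c ⬝ᵥ c = ((∑ y, ‖c y‖ ^ 2 : ℝ) : ℂ) := by
  simp only [dotProduct, Pi.star_apply, Complex.star_def, Complex.ofReal_sum]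
  exact Finset.sum_congr rfl fun y _ => by rw [Complex.sq_norm, Complex.normSq_eq_conj_mul_self]

lemma sum_norm_sq_prodv {d₁ d₂ : ℕ} (a : Fin d₁ → ℂ) (b : Fin d₂ → ℂ) :
    ∑ y, ‖prodv a b y‖ ^ 2 = (∑ y, ‖a y‖ ^ 2) * ∑ y, ‖b y‖ ^ 2 := by
  simp only [prodv, Fintype.sum_prod_type, Finset.sum_mul_sum, norm_mul, mul_pow]

lemma prodv_smul_smul {d₁ d₂ : ℕ} (r s : ℂ) (a : Fin d₁ → ℂ) (b : Fin d₂ → ℂ) :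
    prodv (r • a) (s • b) = (r * s) • prodv a b := by
  ext y
  simp only [prodv, Pi.smul_apply, smul_eq_mul]
  ring

lemma exists_unit_smul_eq {ι : Type*} [Fintype ι] {c : ι → ℂ} (hc : c ≠ 0) :
    ∃ a : ι → ℂ, star a ⬝ᵥ a = 1 ∧ c = ((√(∑ y, ‖c y‖ ^ 2) : ℝ) : ℂ) • a := by
  set r := √(∑ y, ‖c y‖ ^ 2)
  have hpos : 0 < ∑ y, ‖c y‖ ^ 2 := by
    have := dotProduct_star_self_pos_iff.2 hc
    rw [star_dotProduct_self_eq_sum_norm_sq] at this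
    exact_mod_cast this
  have hr : (r : ℂ) ≠ 0 := by exact_mod_cast (Real.sqrt_pos.2 hpos).ne'
  refine ⟨(r : ℂ)⁻¹ • c, ?_, by rw [smul_smul, mul_inv_cancel₀ hr, one_smul]⟩
  have hr2 : (r : ℂ) ^ 2 = ((∑ y, ‖c y‖ ^ 2 : ℝ) : ℂ) := by
    exact_mod_cast Real.sq_sqrt hpos.le
  rw [star_smul, smul_dotProduct, dotProduct_smul, star_dotProduct_self_eq_sum_norm_sq, ← hr2]
  simp only [smul_eq_mul, star_inv₀, Complex.star_def, Complex.conj_ofReal]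
  field_simp

lemma norm_sq_dotProduct_prodv_le {d₁ d₂ : ℕ} (ψ : Fin d₁ × Fin d₂ → ℂ) {μ : ℝ}
    (hμ : ∀ a b, star a ⬝ᵥ a = 1 → star b ⬝ᵥ b = 1 → ‖star ψ ⬝ᵥ prodv a b‖ ^ 2 ≤ μ)
    (c₁ : Fin d₁ → ℂ) (c₂ : Fin d₂ → ℂ) :
    ‖star ψ ⬝ᵥ prodv c₁ c₂‖ ^ 2 ≤ μ * ((∑ y, ‖c₁ y‖ ^ 2) * ∑ y, ‖c₂ y‖ ^ 2) := by
  by_cases h₁ : c₁ = 0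
  · simp [h₁, prodv, dotProduct]
  by_cases h₂ : c₂ = 0
  · simp [h₂, prodv, dotProduct]
  obtain ⟨a, ha, hc₁⟩ := exists_unit_smul_eq h₁
  obtain ⟨b, hb, hc₂⟩ := exists_unit_smul_eq h₂
  set s₁ := ∑ y, ‖c₁ y‖ ^ 2
  set s₂ := ∑ y, ‖c₂ y‖ ^ 2
  have hs₁ : 0 ≤ s₁ := by positivity
  have hs₂ : 0 ≤ s₂ := by positivity
  calc ‖star ψ ⬝ᵥ prodv c₁ c₂‖ ^ 2 = ‖star ψ ⬝ᵥ prodv a b‖ ^ 2 * (s₁ * s₂) := by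
        rw [hc₁, hc₂, prodv_smul_smul, dotProduct_smul, smul_eq_mul, norm_mul, norm_mul,
          Complex.norm_real, Complex.norm_real, Real.norm_of_nonneg (Real.sqrt_nonneg _),
          Real.norm_of_nonneg (Real.sqrt_nonneg _), mul_pow, mul_pow, Real.sq_sqrt hs₁,
          Real.sq_sqrt hs₂]
        ring
    _ ≤ μ * (s₁ * s₂) := by gcongr; exact hμ a b ha hb

lemma sum_norm_sq_dotProduct_le_one {ι : Type*} [Fintype ι] {N : ℕ} (ψ : Fin N → ι → ℂ)
    (hortho : ∀ i j, star (ψ i) ⬝ᵥ ψ j = if i = j then 1 else 0)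
    {φ : ι → ℂ} (hφ : star φ ⬝ᵥ φ = 1) :
    ∑ i, ‖star (ψ i) ⬝ᵥ φ‖ ^ 2 ≤ 1 := by
  have hinner (x y : ι → ℂ) : inner ℂ (WithLp.toLp 2 x) (WithLp.toLp 2 y) = star x ⬝ᵥ y := by
    rw [EuclideanSpace.inner_toLp_toLp, dotProduct_comm]
  have hv : Orthonormal ℂ fun i => WithLp.toLp 2 (ψ i) := by
    rw [orthonormal_iff_ite]
    exact fun i j => (hinner _ _).trans (hortho i j)
  have hnorm : ‖WithLp.toLp 2 φ‖ ^ 2 = 1 := by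
    rw [← inner_self_eq_norm_sq (𝕜 := ℂ), hinner, hφ, RCLike.one_re]
  simpa only [hinner, hnorm] using hv.sum_inner_products_le (x := WithLp.toLp 2 φ) (s := .univ)

/-- The trace of the completeness relation `∑ₐ mₐ |uₐ⟩⟨uₐ| = 1`. -/
lemma sum_mul_sum_norm_sq_eq_card {ι : Type*} [Fintype ι] [DecidableEq ι] {A : ℕ}
    (m : Fin A → ℝ) (u : Fin A → ι → ℂ)
    (hcomp : ∑ a, (m a : ℂ) • vecMulVec (u a) (star (u a)) = 1) :
    ∑ a, m a * ∑ y, ‖u a y‖ ^ 2 = Fintype.card ι := by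
  have h := congrArg trace hcomp
  rw [trace_sum, trace_one] at h
  simp only [trace_smul, trace_vecMulVec, dotProduct_comm (u _),
    star_dotProduct_self_eq_sum_norm_sq, smul_eq_mul] at h
  exact_mod_cast h

lemma sum_norm_sq_prodv_mul_le {d₁ d₂ N : ℕ} (ψ : Fin N → Fin d₁ × Fin d₂ → ℂ)
    (hortho : ∀ i j, star (ψ i) ⬝ᵥ ψ j = if i = j then 1 else 0) {L : ℝ} (hL0 : 0 ≤ L)
    (hL : ∀ i a b, star a ⬝ᵥ a = 1 → star b ⬝ᵥ b = 1 → ‖star (ψ i) ⬝ᵥ prodv a b‖ ^ 2 ≤ L)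
    (χ₁ : Fin d₁ → ℂ) (χ₂ : Fin d₂ → ℂ) {φ : Fin d₁ × Fin d₂ → ℂ} (hφ : star φ ⬝ᵥ φ = 1) :
    ∑ i, ‖star (ψ i) ⬝ᵥ prodv χ₁ χ₂‖ ^ 2 * ‖star (ψ i) ⬝ᵥ φ‖ ^ 2 ≤
      L * ∑ y, ‖prodv χ₁ χ₂ y‖ ^ 2 := by
  calc ∑ i, ‖star (ψ i) ⬝ᵥ prodv χ₁ χ₂‖ ^ 2 * ‖star (ψ i) ⬝ᵥ φ‖ ^ 2
      ≤ ∑ i, L * (∑ y, ‖prodv χ₁ χ₂ y‖ ^ 2) * ‖star (ψ i) ⬝ᵥ φ‖ ^ 2 := by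
        gcongr with i
        rw [sum_norm_sq_prodv]
        exact norm_sq_dotProduct_prodv_le (ψ i) (hL i) χ₁ χ₂
    _ = L * (∑ y, ‖prodv χ₁ χ₂ y‖ ^ 2) * ∑ i, ‖star (ψ i) ⬝ᵥ φ‖ ^ 2 :=
        (Finset.mul_sum _ _ _).symm
    _ ≤ L * ∑ y, ‖prodv χ₁ χ₂ y‖ ^ 2 :=
        mul_le_of_le_one_right (by positivity) (sum_norm_sq_dotProduct_le_one ψ hortho hφ)

theorem stmt7_general (d₁ d₂ N : ℕ) (hN : 0 < N)
    (ψ : Fin N → (Fin d₁ × Fin d₂ → ℂ))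
    (hortho : ∀ i j, star (ψ i) ⬝ᵥ ψ j = if i = j then 1 else 0)
    (lam : Fin N → ℝ)
    (hlam : ∀ i, IsGreatest {x : ℝ | ∃ (a : Fin d₁ → ℂ) (b : Fin d₂ → ℂ),
        star a ⬝ᵥ a = 1 ∧ star b ⬝ᵥ b = 1 ∧
        x = (‖star (ψ i) ⬝ᵥ prodv a b‖)^2} (lam i)) :
    sSup (sepFidSet N (fun _ => (N : ℝ)⁻¹) ψ) ≤
      (Finset.univ.sup' (Finset.univ_nonempty_iff.mpr ⟨⟨0, hN⟩⟩) lam) * d₁ * d₂ / N := by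
  set L := Finset.univ.sup' (Finset.univ_nonempty_iff.mpr ⟨⟨0, hN⟩⟩) lam
  have hL i a b (ha : star a ⬝ᵥ a = 1) (hb : star b ⬝ᵥ b = 1) :
      ‖star (ψ i) ⬝ᵥ prodv a b‖ ^ 2 ≤ L :=
    ((hlam i).2 ⟨a, b, ha, hb, rfl⟩).trans (Finset.le_sup' lam (Finset.mem_univ i))
  have hL0 : 0 ≤ L := by
    obtain ⟨a, b, ha, hb, -⟩ := (hlam ⟨0, hN⟩).1
    exact (sq_nonneg _).trans (hL ⟨0, hN⟩ a b ha hb)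
  refine Real.sSup_le ?_ (by positivity)
  rintro x ⟨A, m, χ₁, χ₂, φ, hm, hφ, hcomp, rfl⟩
  have htrace := sum_mul_sum_norm_sq_eq_card m (fun a => prodv (χ₁ a) (χ₂ a)) hcomp
  calc ∑ a, ∑ i, (N : ℝ)⁻¹ * m a * ‖star (ψ i) ⬝ᵥ prodv (χ₁ a) (χ₂ a)‖ ^ 2 *
        ‖star (ψ i) ⬝ᵥ φ a‖ ^ 2
      = ∑ a, (N : ℝ)⁻¹ * m a * ∑ i, ‖star (ψ i) ⬝ᵥ prodv (χ₁ a) (χ₂ a)‖ ^ 2 *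
          ‖star (ψ i) ⬝ᵥ φ a‖ ^ 2 := by
        simp only [mul_assoc, Finset.mul_sum]
    _ ≤ ∑ a, (N : ℝ)⁻¹ * m a * (L * ∑ y, ‖prodv (χ₁ a) (χ₂ a) y‖ ^ 2) := by
        gcongr with a
        · have := hm a; positivity
        · exact sum_norm_sq_prodv_mul_le ψ hortho hL0 hL _ _ (hφ a)
    _ = (N : ℝ)⁻¹ * L * ∑ a, m a * ∑ y, ‖prodv (χ₁ a) (χ₂ a) y‖ ^ 2 := by
        rw [Finset.mul_sum]
        exact Finset.sum_congr rfl fun a _ => by ring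
    _ = L * d₁ * d₂ / N := by
        rw [htrace, Fintype.card_prod, Fintype.card_fin, Fintype.card_fin]
        push_cast
        field_simp

/-- Corollary 2: for `N` equally likely mutually orthogonal pure states in
`ℂ^{d₁} ⊗ ℂ^{d₂}`, the separable fidelity satisfies `F_S ≤ λ_max d₁ d₂ / N`, where
`λ_max` is the largest of the squared largest Schmidt coefficients. -/
theorem stmt7 (d₁ d₂ N : ℕ) (hd : d₁ ≤ d₂) (hN : 0 < N)
    (ψ : Fin N → (Fin d₁ × Fin d₂ → ℂ))
    (hortho : ∀ i j, star (ψ i) ⬝ᵥ ψ j = if i = j then 1 else 0)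
    (lam : Fin N → ℝ)
    (hlam : ∀ i, IsGreatest {x : ℝ | ∃ (a : Fin d₁ → ℂ) (b : Fin d₂ → ℂ),
        star a ⬝ᵥ a = 1 ∧ star b ⬝ᵥ b = 1 ∧
        x = (‖star (ψ i) ⬝ᵥ prodv a b‖)^2} (lam i)) :
    sSup (sepFidSet N (fun _ => (N : ℝ)⁻¹) ψ) ≤
      (Finset.univ.sup' (Finset.univ_nonempty_iff.mpr ⟨⟨0, hN⟩⟩) lam) * d₁ * d₂ / N :=
  stmt7_general d₁ d₂ N hN ψ hortho lam hlam
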